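/- For an instance (G, P) of the K-terminal reliability problem in which every edge failure probability p_e has a finite binary expansion with m_e bits, and with M = Σ_{e∈E} m_e, the unreliability of G satisfies u_G(P) = #F_K(G′) / 2^M, where #F_K(G′) is the projected model count of the formula ψ on the transformed graph G′. -/

import Mathlib

/-!
A labelling `S` satisfying `ψ` is a cut separating two terminals that no operational edge
crosses, so `ψ` is satisfiable exactly on unsafe states (take `S` to be the component of a
terminal). On `G′` such cuts correspond to cuts of `G` for the state in which `e` is up iff its
gadget joins its terminals: a cut restricts to the original vertices, and a cut of `G` extends
into every gadget. The gadgets of a uniformly random state of `G′` are independent, and the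
gadget of `e` joins its terminals with probability `Σ_k b^e_k 2^(-k) = 1 - p_e`; hence
`#F_K(G′) = 2^M u_G(P)`.
-/

/-- One step along an operational edge: `a` and `b` are the two endpoints of some
edge `e` with `X e = true`. -/
def edgeStep {V E : Type*} (uE vE : E → V) (X : E → Bool) (a b : V) : Prop :=
  ∃ e : E, X e = true ∧ ((uE e = a ∧ vE e = b) ∨ (uE e = b ∧ vE e = a))

/-- `a` and `b` are `X`-connected: reflexive-transitive closure of `edgeStep`. -/
def xConnected {V E : Type*} (uE vE : E → V) (X : E → Bool) (a b : V) : Prop :=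
  Relation.ReflTransGen (edgeStep uE vE X) a b

/-- The state `X` is safe (`Φ(X) = 1`): every pair of terminals is `X`-connected. -/
def safe {V E : Type*} (uE vE : E → V) (K : Finset V) (X : E → Bool) : Prop :=
  ∀ a ∈ K, ∀ b ∈ K, xConnected uE vE X a b

/-- `(X, S)` satisfies the formula `ψ`. -/
def satPsi {V E : Type*} (uE vE : E → V) (K : Finset V) (X : E → Bool) (S : V → Bool) : Prop :=
  (∃ j ∈ K, S j = true) ∧ (∃ k ∈ K, S k = false) ∧
    ∀ e : E, ((S (uE e) = true ∧ X e = true) → S (vE e) = true) ∧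
      ((S (vE e) = true ∧ X e = true) → S (uE e) = true)


open scoped Classical in
/-- The `K`-terminal unreliability of the graph with edge failure probabilities `p`:
`u_G(P) = Σ_X (1 − Φ(X)) · ∏_e p_e^(1−[X e]) (1 − p_e)^[X e]`. -/
noncomputable def unrel {V E : Type*} [Fintype E] [DecidableEq E]
    (uE vE : E → V) (K : Finset V) (p : E → ℝ) : ℝ :=
  ∑ X : E → Bool, (if safe uE vE K X then (0 : ℝ) else 1) *
    ∏ e : E, p e ^ (if X e then 0 else 1) * (1 - p e) ^ (if X e then 1 else 0)

/-- `z^e_k`: the number of zeros among the first `k` bits `b^e_1, …, b^e_k` of the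
binary expansion attached to edge `e` (so `gz be e 0 = 0`). -/
def gz {E : Type*} (be : E → ℕ → Bool) (e : E) (k : ℕ) : ℕ :=
  k - ∑ i ∈ Finset.Icc 1 k, (if be e i then 1 else 0)

/-- Vertices of the transformed graph `G′`: the original vertices together with the
fresh interior gadget vertices `v_1, …, v_{z_{m_e}}` (distinct across gadgets). -/
abbrev Vtrans (V E : Type*) (be : E → ℕ → Bool) (me : E → ℕ) : Type _ :=
  V ⊕ (Σ e : E, Fin (gz be e (me e)))

/-- The gadget vertex `v_j` of the gadget replacing edge `e`, as a vertex of `G′`: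
`v_0` is identified with the endpoint `uE e`, `v_{z_{m_e}+1}` with the endpoint
`vE e`, and `v_1, …, v_{z_{m_e}}` are fresh interior vertices. -/
def gadgetVertex {V E : Type*} (uE vE : E → V) (be : E → ℕ → Bool) (me : E → ℕ)
    (e : E) (j : ℕ) : Vtrans V E be me :=
  if j = 0 then Sum.inl (uE e)
  else if j = gz be e (me e) + 1 then Sum.inl (vE e)
  else if h : j - 1 < gz be e (me e) then Sum.inr ⟨e, ⟨j - 1, h⟩⟩
  else Sum.inl (uE e)

/-- First endpoint of edge `(e, k)` of `G′` (the edge for bit `k+1` of the gadget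
replacing `e`): the gadget vertex `v_{z_k}`. -/
def uTrans {V E : Type*} (uE vE : E → V) (be : E → ℕ → Bool) (me : E → ℕ) :
    (Σ e : E, Fin (me e)) → Vtrans V E be me :=
  fun ek => gadgetVertex uE vE be me ek.1 (gz be ek.1 ek.2.val)

/-- Second endpoint of edge `(e, k)` of `G′`: the gadget vertex `v_{z_m+1}` if bit
`k+1` is one, and `v_{z_{k+1}}` otherwise. -/
def vTrans {V E : Type*} (uE vE : E → V) (be : E → ℕ → Bool) (me : E → ℕ) :
    (Σ e : E, Fin (me e)) → Vtrans V E be me :=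
  fun ek =>
    if be ek.1 (ek.2.val + 1) then gadgetVertex uE vE be me ek.1 (gz be ek.1 (me ek.1) + 1)
    else gadgetVertex uE vE be me ek.1 (gz be ek.1 (ek.2.val + 1))

theorem sum_Icc_one_eq_sum_range {M : Type*} [AddCommMonoid M] (f : ℕ → M) (n : ℕ) :
    ∑ k ∈ Finset.Icc 1 n, f k = ∑ k ∈ Finset.range n, f (k + 1) := by
  rw [Finset.range_eq_Ico, Finset.sum_Ico_add', zero_add, Finset.Ico_add_one_right_eq_Icc]

theorem card_subtype_pi_comp {ι β : Type*} [Fintype ι] [DecidableEq ι] [Fintype β]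
    {α : ι → Type*} [∀ i, Fintype (α i)] (f : ∀ i, α i → β) (P : (ι → β) → Prop)
    [DecidablePred P] :
    Nat.card {W : ∀ i, α i // P fun i => f i (W i)}
      = ∑ X : ι → β, if P X then ∏ i, Nat.card {a // f i a = X i} else 0 := by
  have hfiber (X : ι → β) : Nat.card {W : ∀ i, α i // (fun i => f i (W i)) = X}
      = ∏ i, Nat.card {a // f i a = X i} := by
    rw [← Nat.card_pi]
    exact Nat.card_congr ((Equiv.subtypeEquivRight fun W => funext_iff).trans
      (Equiv.subtypePiEquivPi (p := fun i a => f i a = X i)))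
  rw [← Nat.card_congr (Equiv.sigmaSubtypeFiberEquivSubtype (fun (W : ∀ i, α i) i => f i (W i))
    (p := fun W => P fun i => f i (W i)) (q := P) fun W => Iff.rfl), Nat.card_sigma,
    ← Finset.sum_filter, ← Finset.sum_subtype_eq_sum_filter, Finset.subtype_univ]
  simp only [hfiber]

section Psi
variable {V E : Type*} (uE vE : E → V) (K : Finset V) (X : E → Bool)

theorem satPsi_iff (S : V → Bool) :
    satPsi uE vE K X S ↔ (∃ j ∈ K, S j = true) ∧ (∃ k ∈ K, S k = false) ∧
      ∀ e, X e = true → S (uE e) = S (vE e) := by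
  refine and_congr_right' (and_congr_right' (forall_congr' fun e => ?_))
  cases S (uE e) <;> cases S (vE e) <;> simp

theorem exists_satPsi_iff_not_safe :
    (∃ S : V → Bool, satPsi uE vE K X S) ↔ ¬ safe uE vE K X := by
  simp only [satPsi_iff, safe, not_forall]
  constructor
  · rintro ⟨S, ⟨j, hj, hSj⟩, ⟨k, hk, hSk⟩, hS⟩
    have hconst : ∀ {a b}, xConnected uE vE X a b → S a = S b := by
      intro a b hab
      induction hab with
      | refl => rfl
      | tail _ hstep ih =>
        obtain ⟨e, hXe, ⟨rfl, rfl⟩ | ⟨rfl, rfl⟩⟩ := hstep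
        exacts [ih.trans (hS e hXe), ih.trans (hS e hXe).symm]
    exact ⟨j, hj, k, hk, fun hjk => by simpa [hSj, hSk] using hconst hjk⟩
  · classical
    rintro ⟨a, ha, b, hb, hab⟩
    refine ⟨fun v => decide (xConnected uE vE X a v), ⟨a, ha, by simpa using .refl⟩,
      ⟨b, hb, by simpa using hab⟩, fun e hXe => ?_⟩
    have hstep : ∀ {u v}, edgeStep uE vE X u v → xConnected uE vE X a u →
        xConnected uE vE X a v := fun h hu => hu.tail h
    simp only [decide_eq_decide]
    exact ⟨hstep ⟨e, hXe, .inl ⟨rfl, rfl⟩⟩, hstep ⟨e, hXe, .inr ⟨rfl, rfl⟩⟩⟩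

end Psi

section ZeroCount
variable {E : Type*} (be : E → ℕ → Bool) (e : E)

theorem gz_zero : gz be e 0 = 0 := by simp [gz]

theorem gz_succ (k : ℕ) :
    gz be e (k + 1) = if be e (k + 1) then gz be e k else gz be e k + 1 := by
  have hle : ∑ i ∈ Finset.Icc 1 k, (if be e i then 1 else 0) ≤ k :=
    (Finset.sum_le_card_nsmul _ _ 1 fun i _ => by split <;> omega).trans (by simp)
  unfold gz
  rw [Finset.sum_Icc_succ_top (by omega)]
  split <;> omega

theorem gz_succ_of_true {k : ℕ} (hk : be e (k + 1) = true) : gz be e (k + 1) = gz be e k := by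
  rw [gz_succ, if_pos hk]

theorem gz_succ_of_false {k : ℕ} (hk : be e (k + 1) = false) :
    gz be e (k + 1) = gz be e k + 1 := by
  rw [gz_succ, hk, if_neg Bool.false_ne_true]

theorem gz_monotone : Monotone (gz be e) :=
  monotone_nat_of_le_succ fun k => by rw [gz_succ]; split <;> omega

theorem gz_lt_of_false {i j : ℕ} (hi : be e (i + 1) = false) (hij : i < j) :
    gz be e i < gz be e j :=
  calc gz be e i < gz be e (i + 1) := by rw [gz_succ_of_false be e hi]; omega
    _ ≤ gz be e j := gz_monotone be e hij

theorem gz_injective_of_false {k k' : ℕ} (hk : be e (k + 1) = false)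
    (hk' : be e (k' + 1) = false) (h : gz be e k = gz be e k') : k = k' := by
  rcases lt_trichotomy k k' with hkk' | rfl | hk'k
  · exact absurd h (gz_lt_of_false be e hk hkk').ne
  · rfl
  · exact absurd h (gz_lt_of_false be e hk' hk'k).ne'

end ZeroCount

/-- The zero-bit edges before a one-bit edge `k` form the path from `v_0` to its tail
`v_{z_k}`, so this says that the terminals of the gadget with bits `b 1, …, b m` are joined. -/
def GadgetConnects (b : ℕ → Bool) {m : ℕ} (Y : Fin m → Bool) : Prop :=
  ∃ k : Fin m, b (k + 1) = true ∧ Y k = true ∧ ∀ j < k, b (j + 1) = false → Y j = true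

instance (b : ℕ → Bool) {m : ℕ} (Y : Fin m → Bool) : Decidable (GadgetConnects b Y) := by
  unfold GadgetConnects; infer_instance

theorem gadgetConnects_cons (b : ℕ → Bool) {m : ℕ} (y : Bool) (Y : Fin m → Bool) :
    GadgetConnects b (Fin.cons y Y : Fin (m + 1) → Bool) ↔
      if b 1 then y = true ∨ GadgetConnects (fun i => b (i + 1)) Y
      else y = true ∧ GadgetConnects (fun i => b (i + 1)) Y := by
  unfold GadgetConnects
  simp only [Fin.exists_fin_succ, Fin.forall_fin_succ, Fin.cons_zero, Fin.cons_succ, Fin.val_zero,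
    Fin.val_succ, Fin.succ_lt_succ_iff, Fin.succ_pos, Fin.not_lt_zero, zero_add]
  cases b 1 <;> cases y <;> simp [add_assoc]

/-- Scanning the edges in order, the terminals are joined iff the first edge that is a down
zero-bit edge or an up one-bit edge is the latter; so a one-bit edge `k` accounts for
`2^(m-k)` states. -/
theorem card_gadgetConnects (b : ℕ → Bool) (m : ℕ) :
    (Fintype.card {Y : Fin m → Bool // GadgetConnects b Y} : ℝ)
      = 2 ^ m * ∑ k ∈ Finset.Icc 1 m, if b k then (1 / 2 : ℝ) ^ k else 0 := by
  rw [sum_Icc_one_eq_sum_range]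
  induction m generalizing b with
  | zero => simp [GadgetConnects]
  | succ m ih =>
    have hcons := Fintype.card_congr ((Fin.consEquiv (n := m) fun _ => Bool).subtypeEquiv
      fun p => (gadgetConnects_cons b p.1 p.2).symm)
    have hsum : ∑ k ∈ Finset.range m, (if b (k + 2) then (1 / 2 : ℝ) ^ (k + 2) else 0)
        = 1 / 2 * ∑ k ∈ Finset.range m, if b (k + 2) then (1 / 2 : ℝ) ^ (k + 1) else 0 := by
      rw [Finset.mul_sum]
      exact Finset.sum_congr rfl fun k _ => by split <;> ring
    rw [← hcons, Finset.sum_range_succ', hsum, mul_add, ← mul_assoc, pow_succ, mul_assoc _ 2,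
      mul_one_div_cancel two_ne_zero, mul_one, ← ih fun i => b (i + 1)]
    simp only [Fintype.card_subtype, Finset.card_filter, Fintype.sum_prod_type, Fintype.sum_bool]
    cases b 1 <;> simp [add_comm]

theorem card_gadgetConnects_fiber (b : ℕ → Bool) (m : ℕ) (s : Bool) :
    (Nat.card {Y : Fin m → Bool // decide (GadgetConnects b Y) = s} : ℝ)
      = 2 ^ m * if s then ∑ k ∈ Finset.Icc 1 m, (if b k then (1 / 2 : ℝ) ^ k else 0)
        else 1 - ∑ k ∈ Finset.Icc 1 m, (if b k then (1 / 2 : ℝ) ^ k else 0) := by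
  rw [Nat.card_eq_fintype_card]
  cases s
  · simp only [decide_eq_false_iff_not, Fintype.card_subtype_compl, Bool.false_eq_true, if_false]
    rw [Nat.cast_sub (Fintype.card_subtype_le _), card_gadgetConnects]
    simp only [Fintype.card_fun, Fintype.card_bool, Fintype.card_fin]
    push_cast
    ring
  · simp only [decide_eq_true_eq, card_gadgetConnects, if_true]

section Labelling
variable {E : Type*} (be : E → ℕ → Bool) (e : E)

def gadgetHead (m k : ℕ) : ℕ := if be e (k + 1) then gz be e m + 1 else gz be e (k + 1)

theorem gadgetHead_le {m k : ℕ} (hk : k < m) : gadgetHead be e m k ≤ gz be e m + 1 := by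
  unfold gadgetHead
  split
  · rfl
  · exact (gz_monotone be e hk).trans (Nat.le_succ _)

theorem GadgetConnects.labelling_eq {m : ℕ} {Y : Fin m → Bool} (hY : GadgetConnects (be e) Y)
    {T : ℕ → Bool}
    (hT : ∀ k : Fin m, Y k = true → T (gz be e k) = T (gadgetHead be e m k)) :
    T 0 = T (gz be e m + 1) := by
  obtain ⟨k, hbk, hYk, hpre⟩ := hY
  have hchain : ∀ i ≤ (k : ℕ), T (gz be e i) = T 0 := by
    intro i
    induction i with
    | zero => intro _; rw [gz_zero]
    | succ i ih =>
      intro hi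
      rw [← ih (by omega)]
      cases hb : be e (i + 1)
      · have hi' : (⟨i, by omega⟩ : Fin m) < k := Fin.mk_lt_of_lt_val (by omega)
        have := hT ⟨i, by omega⟩ (hpre _ hi' hb)
        simp only [gadgetHead, hb] at this
        exact this.symm
      · rw [gz_succ_of_true be e hb]
  calc T 0 = T (gz be e k) := (hchain k le_rfl).symm
    _ = T (gadgetHead be e m k) := hT k hYk
    _ = T (gz be e m + 1) := by simp [gadgetHead, hbk]

/-- A cut of the contracted edge extends to a cut of the gadget: the vertices reachable from
`v_0` along the up zero-bit edges, bar the terminal `v_{z_m+1}`, take the label `s₀`. -/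
theorem exists_gadget_labelling {m : ℕ} (Y : Fin m → Bool) (s₀ s₁ : Bool)
    (h : GadgetConnects (be e) Y → s₀ = s₁) :
    ∃ T : ℕ → Bool, T 0 = s₀ ∧ T (gz be e m + 1) = s₁ ∧
      ∀ k : Fin m, Y k = true → T (gz be e k) = T (gadgetHead be e m k) := by
  classical
  let reach (j : ℕ) : Prop := ∀ k : Fin m, be e (k + 1) = false → gz be e k < j → Y k = true
  refine ⟨fun j => if j ≤ gz be e m ∧ reach j then s₀ else s₁, by simp [reach], by simp,
    fun k hYk => ?_⟩
  have hk_le : gz be e k ≤ gz be e m := gz_monotone be e k.2.le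
  cases hb : be e (k + 1)
  · have hhead : gadgetHead be e m k = gz be e k + 1 := by
      simp only [gadgetHead, hb, gz_succ_of_false be e hb, Bool.false_eq_true, if_false]
    have hle : gz be e k + 1 ≤ gz be e m := by
      rw [← gz_succ_of_false be e hb]; exact gz_monotone be e k.2
    have hreach : reach (gz be e k + 1) ↔ reach (gz be e k) := by
      refine ⟨fun hr k' hk' hlt => hr k' hk' (by omega), fun hr k' hk' hlt => ?_⟩
      rcases Nat.lt_or_ge (gz be e k') (gz be e k) with hlt' | hge
      · exact hr k' hk' hlt'
      · rw [Fin.ext (gz_injective_of_false be e hk' hb (by omega))]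
        exact hYk
    simp only [hhead, hk_le, hle, true_and, hreach]
  · have hlast : ¬ (gz be e m + 1 ≤ gz be e m ∧ reach (gz be e m + 1)) :=
      fun h' => Nat.not_succ_le_self _ h'.1
    simp only [gadgetHead, hb, if_true, if_neg hlast, hk_le, true_and]
    split_ifs with hr
    · exact h ⟨k, hb, hYk, fun j hjk hbj => hr j hbj (gz_lt_of_false be e hbj hjk)⟩
    · rfl

end Labelling

section Transformed
variable {V E : Type*} (uE vE : E → V) (be : E → ℕ → Bool) (me : E → ℕ)

theorem gadgetVertex_zero (e : E) : gadgetVertex uE vE be me e 0 = Sum.inl (uE e) := if_pos rfl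

theorem gadgetVertex_last (e : E) :
    gadgetVertex uE vE be me e (gz be e (me e) + 1) = Sum.inl (vE e) := by
  unfold gadgetVertex
  rw [if_neg (Nat.succ_ne_zero _), if_pos rfl]

theorem vTrans_mk (e : E) (k : Fin (me e)) :
    vTrans uE vE be me ⟨e, k⟩ = gadgetVertex uE vE be me e (gadgetHead be e (me e) k) :=
  (apply_ite _ _ _ _).symm

-- The vertex `Sum.inr ⟨e, i⟩` of `G′` is the interior vertex `v_{i+1}` of the gadget of `e`.
def gadgetLabelling (S : V → Bool) (T : E → ℕ → Bool) : Vtrans V E be me → Bool :=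
  Sum.elim S fun q => T q.1 (q.2 + 1)

theorem gadgetLabelling_gadgetVertex (S : V → Bool) (T : E → ℕ → Bool) (e : E)
    (h₀ : T e 0 = S (uE e)) (h₁ : T e (gz be e (me e) + 1) = S (vE e)) {j : ℕ}
    (hj : j ≤ gz be e (me e) + 1) :
    gadgetLabelling be me S T (gadgetVertex uE vE be me e j) = T e j := by
  unfold gadgetVertex
  split_ifs with hj₀ hj₁ hj₂
  · rw [hj₀]; exact h₀.symm
  · rw [hj₁]; exact h₁.symm
  · simp only [gadgetLabelling, Sum.elim_inr]
    congr 1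
    omega
  · omega

def gadgetState (X' : (Σ e : E, Fin (me e)) → Bool) (e : E) : Bool :=
  decide (GadgetConnects (be e) fun k => X' ⟨e, k⟩)

theorem exists_satPsi_transformed_iff [DecidableEq V] [DecidableEq E] (K : Finset V)
    (X' : (Σ e : E, Fin (me e)) → Bool) :
    (∃ S', satPsi (uTrans uE vE be me) (vTrans uE vE be me) (K.image Sum.inl) X' S') ↔
      ∃ S, satPsi uE vE K (gadgetState be me X') S := by
  simp only [satPsi_iff, Finset.exists_mem_image, Sigma.forall]
  constructor
  · rintro ⟨S', hj, hk, hS'⟩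
    refine ⟨S' ∘ Sum.inl, hj, hk, fun e he => ?_⟩
    have := GadgetConnects.labelling_eq be e (of_decide_eq_true he)
      (T := fun j => S' (gadgetVertex uE vE be me e j))
      fun k hk => by simpa only [uTrans, vTrans_mk] using hS' e k hk
    simpa only [Function.comp_apply, gadgetVertex_zero, gadgetVertex_last] using this
  · rintro ⟨S, hj, hk, hS⟩
    choose T hT₀ hT₁ hT using fun e => exists_gadget_labelling be e (fun k => X' ⟨e, k⟩)
      (S (uE e)) (S (vE e)) fun h => hS e (decide_eq_true h)
    refine ⟨gadgetLabelling be me S T, hj, hk, fun e k hX => ?_⟩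
    rw [uTrans, vTrans_mk,
      gadgetLabelling_gadgetVertex uE vE be me S T e (hT₀ e) (hT₁ e)
        ((gz_monotone be e k.2.le).trans (Nat.le_succ _)),
      gadgetLabelling_gadgetVertex uE vE be me S T e (hT₀ e) (hT₁ e) (gadgetHead_le be e k.2)]
    exact hT e k hX

end Transformed

open scoped Classical in
theorem unrel_eq_sum {V E : Type*} [Fintype E] [DecidableEq E] (uE vE : E → V) (K : Finset V)
    (p : E → ℝ) :
    unrel uE vE K p = ∑ X : E → Bool,
      if ¬ safe uE vE K X then ∏ e, (if X e then 1 - p e else p e) else 0 := by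
  refine Finset.sum_congr rfl fun X _ => ?_
  split_ifs
  · simp
  · refine (one_mul _).trans (Finset.prod_congr rfl fun e _ => ?_)
    cases X e <;> simp

theorem stmt5_general {V E : Type*} [Fintype E] [DecidableEq V] [DecidableEq E]
    (uE vE : E → V) (K : Finset V)
    (p : E → ℝ)
    (me : E → ℕ) (be : E → ℕ → Bool)
    (hbits : ∀ e, 1 - p e
      = ∑ k ∈ Finset.Icc 1 (me e), (if be e k then ((1 : ℝ)/2) ^ k else 0)) :
    unrel uE vE K p
      = (Nat.card {X : (Σ e : E, Fin (me e)) → Bool //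
            ∃ S : Vtrans V E be me → Bool,
              satPsi (uTrans uE vE be me) (vTrans uE vE be me) (K.image Sum.inl) X S} : ℝ)
          / 2 ^ (∑ e : E, me e) := by
  classical
  have hfiber (e : E) (s : Bool) :
      (Nat.card {Y : Fin (me e) → Bool // decide (GadgetConnects (be e) Y) = s} : ℝ)
        = 2 ^ me e * if s then 1 - p e else p e := by
    rw [card_gadgetConnects_fiber, ← hbits, sub_sub_cancel]
  have hcount := Nat.card_congr <|
    (Equiv.subtypeEquivRight fun X' => (exists_satPsi_transformed_iff uE vE be me K X').trans
      (exists_satPsi_iff_not_safe uE vE K _)).trans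
    ((Equiv.piCurry fun e (_ : Fin (me e)) => Bool).subtypeEquiv
      (q := fun W => ¬ safe uE vE K fun e => decide (GadgetConnects (be e) (W e)))
      fun _ => Iff.rfl)
  rw [hcount, card_subtype_pi_comp (fun e Y => decide (GadgetConnects (be e) Y))
    fun X => ¬ safe uE vE K X, unrel_eq_sum]
  simp only [Nat.cast_sum, Nat.cast_ite, Nat.cast_prod, Nat.cast_zero, Finset.sum_div]
  refine Finset.sum_congr rfl fun X _ => ?_
  split_ifs
  · rw [zero_div]
  · rw [← Finset.prod_pow_eq_pow_sum, ← Finset.prod_div_distrib]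
    refine Finset.prod_congr rfl fun e _ => ?_
    rw [hfiber, mul_div_cancel_left₀ _ (pow_ne_zero _ two_ne_zero)]

/-- for an instance `(G, P)` in which every edge failure probability
`p_e` has a finite binary expansion with `m_e` bits, and with `M = Σ_e m_e`, the
unreliability of `G` satisfies `u_G(P) = #F_K(G′) / 2^M`, where `#F_K(G′)` is the
projected model count of `ψ` on the transformed graph `G′`. -/
theorem stmt5 {V E : Type*} [Fintype V] [Fintype E] [DecidableEq V] [DecidableEq E]
    (uE vE : E → V) (K : Finset V) (hK : 2 ≤ K.card)
    (p : E → ℝ) (hp : ∀ e, p e ∈ Set.Ioo (0 : ℝ) 1)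
    (me : E → ℕ) (be : E → ℕ → Bool)
    (hbits : ∀ e, 1 - p e
      = ∑ k ∈ Finset.Icc 1 (me e), (if be e k then ((1 : ℝ)/2) ^ k else 0)) :
    unrel uE vE K p
      = (Nat.card {X : (Σ e : E, Fin (me e)) → Bool //
            ∃ S : Vtrans V E be me → Bool,
              satPsi (uTrans uE vE be me) (vTrans uE vE be me) (K.image Sum.inl) X S} : ℝ)
          / 2 ^ (∑ e : E, me e) :=
  stmt5_general uE vE K p me be hbits
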